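/- arXiv:1805.11379 — 2 statements merged into one kernel-verified Lean document; each statement's English description precedes it below -/
import Mathlib

section
/- Let G be a finite group, let E be a group, and let π : E → G be a surjective group homomorphism whose kernel M is abelian. Regard M (written additively) as a module over the group ring ℤ[G], where g ∈ G acts on M by conjugation by any preimage of g in E (this action is well defined because M is abelian). If M is a free ℤ[G]-module, then the extension splits: there exists a group homomorphism s : G → E with π ∘ s = id_G. In particular s is injective, so G embeds in E, and π restricted to the image of s is an isomorphism onto G. -/
/-!
A set-theoretic section `σ` of `π` has defect `σ g * σ h * (σ (g * h))⁻¹` in the kernel, i.e. a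
2-cocycle `f` with values in `M`, and `σ` can be corrected to the homomorphism `g ↦ j (-c g) * σ g`
as soon as `f` is the coboundary of a cochain `c`. For `G` finite and `M` free over `ℤ[G]`, taking
the coefficient at `1` in a basis expansion gives an additive `p` with `∑ₓ x⁻¹ • p (x • m) = m`,
and then `c g = ∑ₓ x⁻¹ • p (f (x, g))` is such a cochain.
-/

open groupCohomology

namespace MonoidAlgebra

variable {R G : Type*} [Semiring R]

noncomputable def projOne [One G] : R[G] →+ R[G] where
  toFun q := single 1 (q.coeff 1)
  map_zero' := by simp
  map_add' q q' := by simp [single_add]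

@[simp]
lemma projOne_apply [One G] (q : R[G]) : projOne q = single 1 (q.coeff 1) := rfl

lemma sum_of_inv_mul_projOne_of_mul [Group G] [Fintype G] (q : R[G]) :
    ∑ x : G, of R G x⁻¹ * projOne (of R G x * q) = q := by
  apply coeff_injective
  simp only [of_apply, projOne_apply, coeff_single_mul_apply, single_mul_single, one_mul, mul_one,
    coeff_sum]
  exact (Fintype.sum_equiv (Equiv.inv G) _ (fun x => Finsupp.single x (q.coeff x)) fun x => by
    simp).trans (Finsupp.univ_sum_single _)

end MonoidAlgebra

open MonoidAlgebra in
theorem Module.Free.exists_sum_of_inv_smul_of_smul_eq_self {R G M : Type*} [Semiring R] [Group G]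
    [Fintype G] [AddCommMonoid M] [Module R[G] M] [Module.Free R[G] M] :
    ∃ p : M →+ M, ∀ m : M, ∑ x : G, of R G x⁻¹ • p (of R G x • m) = m := by
  let b := Module.Free.chooseBasis R[G] M
  refine ⟨b.repr.symm.toAddMonoidHom.comp
    ((Finsupp.mapRange.addMonoidHom projOne).comp b.repr.toAddMonoidHom), fun m => ?_⟩
  apply b.repr.injective
  refine Finsupp.ext fun i => ?_
  simpa [map_sum, Finsupp.finsetSum_apply] using sum_of_inv_mul_projOne_of_mul (b.repr m i)

theorem groupCohomology.isCoboundary₂_of_sum_inv_smul_smul_eq_self {G A : Type*} [Group G]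
    [Fintype G] [AddCommGroup A] [DistribMulAction G A] (p : A →+ A)
    (hp : ∀ a : A, ∑ x : G, x⁻¹ • p (x • a) = a)
    {f : G × G → A} (hf : IsCocycle₂ f) : IsCoboundary₂ f := by
  refine ⟨fun g => ∑ x : G, x⁻¹ • p (f (x, g)), fun g h => ?_⟩
  have translate : g • ∑ x : G, x⁻¹ • p (f (x, h)) = ∑ x : G, x⁻¹ • p (f (x * g, h)) := by
    rw [Finset.smul_sum]
    exact Fintype.sum_equiv (Equiv.mulRight g⁻¹) _ _ fun x => by simp [smul_smul]
  have cocycle (x : G) : x • f (g, h) = f (x * g, h) + f (x, g) - f (x, g * h) := by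
    rw [hf x g h]; abel
  calc _ = ∑ x : G, x⁻¹ • p (x • f (g, h)) := by
        simp only [translate, cocycle, map_add, map_sub, smul_add, smul_sub, Finset.sum_add_distrib,
          Finset.sum_sub_distrib]
        abel
    _ = f (g, h) := hp _

section Extension

variable {G E M : Type*} [Group G] [Group E] [AddCommGroup M] [DistribMulAction G M]
  {π : E →* G} {j : M → E} {σ : G → E} {f : G × G → M}

theorem isCocycle₂_of_map_eq_mul_mul_inv (hjadd : ∀ a b : M, j (a + b) = j a * j b)
    (hact : ∀ (e : E) (x : M), j (π e • x) = e * j x * e⁻¹) (hσ : ∀ g, π (σ g) = g)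
    (hf : ∀ g h, j (f (g, h)) = σ g * σ h * (σ (g * h))⁻¹)
    (hjinj : Function.Injective j) : IsCocycle₂ f := by
  intro x g h
  apply hjinj
  rw [add_comm (f (x * g, h)), hjadd, hjadd, ← hσ x, hact, hσ, hf, hf, hf, hf, mul_assoc x g h]
  group

theorem exists_monoidHom_rightInverse_of_isCoboundary₂ (hjadd : ∀ a b : M, j (a + b) = j a * j b)
    (hact : ∀ (e : E) (x : M), j (π e • x) = e * j x * e⁻¹) (hσ : ∀ g, π (σ g) = g)
    (hf : ∀ g h, j (f (g, h)) = σ g * σ h * (σ (g * h))⁻¹)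
    (hjmem : ∀ x, π (j x) = 1)
    (hcob : IsCoboundary₂ f) : ∃ s : G →* E, ∀ g, π (s g) = g := by
  obtain ⟨c, hc⟩ := hcob
  have hσmul (g h : G) : σ g * σ h = j (f (g, h)) * σ (g * h) := by rw [hf]; group
  refine ⟨MonoidHom.mk' (fun g => j (-c g) * σ g) fun g h => ?_, fun g => by simp [hjmem, hσ]⟩
  have hconj : j (g • -c h) = σ g * j (-c h) * (σ g)⁻¹ := by rw [← hact, hσ]
  calc j (-c (g * h)) * σ (g * h) = j (-c g + g • -c h + f (g, h)) * σ (g * h) := by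
        congr 2
        rw [smul_neg, ← hc]
        abel
    _ = j (-c g) * σ g * (j (-c h) * σ h) := by
        rw [hjadd, hjadd, hconj, mul_assoc _ (j (f _)), ← hσmul]
        group

end Extension

/-- Let `G` be a finite group, `π : E → G` a surjective homomorphism whose
kernel is abelian, identified (via `j`) with a `ℤ[G]`-module `M` on which `g ∈ G` acts as
conjugation by any preimage of `g` in `E`. If `M` is a free `ℤ[G]`-module, then the extension
splits: there is a homomorphism `s : G → E` with `π ∘ s = id`; in particular `s` is injective,
so `G` embeds in `E`. -/
theorem splitting_of_free_kernel (G E M : Type*) [Group G] [Finite G] [Group E]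
    [AddCommGroup M] [Module (MonoidAlgebra ℤ G) M]
    (π : E →* G) (hπ : Function.Surjective π)
    (j : M → E)
    (hjmem : ∀ x : M, j x ∈ MonoidHom.ker π)
    (hjinj : Function.Injective j)
    (hjsurj : ∀ e ∈ MonoidHom.ker π, ∃ x : M, j x = e)
    (hjadd : ∀ a b : M, j (a + b) = j a * j b)
    (hact : ∀ (g : G) (e : E), π e = g → ∀ x : M,
      j ((MonoidAlgebra.single g (1 : ℤ) : MonoidAlgebra ℤ G) • x) = e * j x * e⁻¹)
    (hfree : Module.Free (MonoidAlgebra ℤ G) M) :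
    ∃ s : G →* E, π.comp s = MonoidHom.id G ∧ Function.Injective s := by
  cases nonempty_fintype G
  -- `g • x` unfolds to `single g 1 • x`, so `hact` applies as it stands
  let _ : DistribMulAction G M := DistribMulAction.compHom M (MonoidAlgebra.of ℤ G)
  have hact' (e : E) (x : M) : j (π e • x) = e * j x * e⁻¹ := hact _ e rfl x
  choose σ hσ using hπ
  choose f hf using fun gh : G × G =>
    hjsurj (σ gh.1 * σ gh.2 * (σ (gh.1 * gh.2))⁻¹) (by simp [hσ])
  obtain ⟨p, hp⟩ := Module.Free.exists_sum_of_inv_smul_of_smul_eq_self (R := ℤ) (G := G) (M := M)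
  have hcocycle := isCocycle₂_of_map_eq_mul_mul_inv hjadd hact' hσ (fun g h => hf (g, h)) hjinj
  obtain ⟨s, hs⟩ := exists_monoidHom_rightInverse_of_isCoboundary₂ hjadd hact' hσ
    (fun g h => hf (g, h)) hjmem (isCoboundary₂_of_sum_inv_smul_smul_eq_self p hp hcocycle)
  exact ⟨s, MonoidHom.ext hs, Function.LeftInverse.injective hs⟩
end

section
/- Let p be an odd prime, let r ≥ 1, let d₁ be an odd positive integer dividing p − 1, and let θ : ℤ/d₁ℤ → AddAut(ℤ/p^rℤ) be an injective group homomorphism. Then there exists an injective group homomorphism from the semidirect product (ℤ/p^rℤ) ⋊_θ (ℤ/d₁ℤ) into B_{p^r}/Γ_2(P_{p^r}). -/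
/-- Relations of the Artin braid group on `n` strands. The generator indexed by
`i : Fin (n-1)` corresponds to `σ_{i+1}` in the usual 1-based notation. -/
def braidRels (n : ℕ) : Set (FreeGroup (Fin (n - 1))) :=
  {r | ∃ i j : Fin (n - 1),
      ((i : ℕ) + 2 ≤ (j : ℕ) ∧
        r = .of i * .of j * (.of i)⁻¹ * (.of j)⁻¹) ∨
      ((i : ℕ) + 1 = (j : ℕ) ∧
        r = .of i * .of j * .of i * (.of j * .of i * .of j)⁻¹)}

/-- The Artin braid group on `n` strands, as a presented group. -/
abbrev BraidGroup (n : ℕ) : Type := PresentedGroup (braidRels n)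

/-- The image of the generator `σ_{i+1}` in the symmetric group: the
transposition `(i+1, i+2)` (0-based: swap of `i` and `i+1`). -/
def braidGenPerm (n : ℕ) (i : Fin (n - 1)) : Equiv.Perm (Fin n) :=
  Equiv.swap ⟨(i : ℕ), by have := i.isLt; omega⟩ ⟨(i : ℕ) + 1, by have := i.isLt; omega⟩

lemma swap_comm_of_ne {α : Type*} [DecidableEq α] {a b c d : α}
    (hac : a ≠ c) (had : a ≠ d) (hbc : b ≠ c) (hbd : b ≠ d) :
    Equiv.swap a b * Equiv.swap c d = Equiv.swap c d * Equiv.swap a b := by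
  have h := Equiv.swap_apply_apply (Equiv.swap c d) a b
  rw [Equiv.swap_inv, Equiv.swap_apply_of_ne_of_ne hac had,
    Equiv.swap_apply_of_ne_of_ne hbc hbd] at h
  calc Equiv.swap a b * Equiv.swap c d
      = Equiv.swap c d * Equiv.swap a b * Equiv.swap c d * Equiv.swap c d := by rw [← h]
    _ = Equiv.swap c d * Equiv.swap a b := by
        rw [mul_assoc, Equiv.swap_mul_self, mul_one]

lemma swap_braid {α : Type*} [DecidableEq α] {a b c : α}
    (hab : a ≠ b) (hac : a ≠ c) (hbc : b ≠ c) :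
    Equiv.swap a b * Equiv.swap b c * Equiv.swap a b =
      Equiv.swap b c * Equiv.swap a b * Equiv.swap b c := by
  have h1 := Equiv.swap_apply_apply (Equiv.swap a b) b c
  have h2 := Equiv.swap_apply_apply (Equiv.swap b c) a b
  rw [Equiv.swap_inv, Equiv.swap_apply_right,
    Equiv.swap_apply_of_ne_of_ne hac.symm hbc.symm] at h1
  rw [Equiv.swap_inv, Equiv.swap_apply_of_ne_of_ne hab hac, Equiv.swap_apply_left] at h2
  rw [← h1, ← h2]

lemma braidRels_lift (n : ℕ) :
    ∀ r ∈ braidRels n, FreeGroup.lift (braidGenPerm n) r = 1 := by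
  rintro r ⟨i, j, ⟨hij, rfl⟩ | ⟨hij, rfl⟩⟩
  · simp only [map_mul, map_inv, FreeGroup.lift_apply_of]
    have hi := i.isLt; have hj := j.isLt
    have h : braidGenPerm n i * braidGenPerm n j = braidGenPerm n j * braidGenPerm n i := by
      apply swap_comm_of_ne <;> (simp only [ne_eq, Fin.mk.injEq]; omega)
    rw [h]; group
  · simp only [map_mul, map_inv, FreeGroup.lift_apply_of]
    have hi := i.isLt; have hj := j.isLt
    have h1 : braidGenPerm n i =
        Equiv.swap (⟨(i : ℕ), by omega⟩ : Fin n) ⟨(i : ℕ) + 1, by omega⟩ := rfl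
    have h2 : braidGenPerm n j =
        Equiv.swap (⟨(i : ℕ) + 1, by omega⟩ : Fin n) ⟨(i : ℕ) + 2, by omega⟩ := by
      unfold braidGenPerm
      congr 1 <;> (apply Fin.ext; simp only; omega)
    rw [h1, h2, swap_braid (by simp only [ne_eq, Fin.mk.injEq]; omega)
      (by simp only [ne_eq, Fin.mk.injEq]; omega) (by simp only [ne_eq, Fin.mk.injEq]; omega)]
    group

/-- The canonical projection from the braid group to the symmetric group,
sending `σ_i` to the transposition `(i, i+1)`. -/
def braidProj (n : ℕ) : BraidGroup n →* Equiv.Perm (Fin n) :=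
  PresentedGroup.toGroup (braidRels_lift n)

/-- `Γ_k(P_n)` regarded as a normal subgroup of `B_n`: the normal closure in `B_n` of the
image of the `k`-th term of the lower central series of the pure braid group
`P_n = ker (braidProj n)`.  (Here `Γ_k(P_n) = lowerCentralSeries P_n (k-1)`, since Mathlib's
lower central series is indexed from `0`.) -/
def gammaB (n k : ℕ) : Subgroup (BraidGroup n) :=
  Subgroup.normalClosure
    ((Subgroup.map (MonoidHom.ker (braidProj n)).subtype
      ((⊤ : Subgroup ↥(MonoidHom.ker (braidProj n))).lowerCentralSeries (k - 1)) :
        Subgroup (BraidGroup n)) : Set (BraidGroup n))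

instance (n k : ℕ) : (gammaB n k).Normal := Subgroup.normalClosure_normal

lemma gammaB_le_ker (n k : ℕ) : gammaB n k ≤ MonoidHom.ker (braidProj n) := by
  apply Subgroup.normalClosure_le_normal
  rintro x ⟨y, _, rfl⟩
  exact y.2

/-- The homomorphism `σ̄ : B_n/Γ_k(P_n) → S_n` induced by `braidProj`. -/
def braidProjBar (n k : ℕ) : BraidGroup n ⧸ gammaB n k →* Equiv.Perm (Fin n) :=
  QuotientGroup.lift (gammaB n k) (braidProj n) (fun _ hx => gammaB_le_ker n k hx)

/-- The (old Mathlib) multiplicative group structure on `AddAut A`: composition. -/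
instance addAutGroupOld (A : Type*) [Add A] : Group (AddAut A) where
  mul g h := AddEquiv.trans h g
  one := AddEquiv.refl _
  inv := AddEquiv.symm
  mul_assoc _ _ _ := rfl
  one_mul _ := rfl
  mul_one _ := rfl
  inv_mul_cancel := AddEquiv.self_trans_symm

/-- Convert additive automorphisms of `A` into multiplicative automorphisms of
`Multiplicative A`. -/
def addAutToMulAut (A : Type*) [AddGroup A] : AddAut A →* MulAut (Multiplicative A) where
  toFun f := AddEquiv.toMultiplicative f
  map_one' := rfl
  map_mul' _ _ := rfl

/-- The action on `Multiplicative A` associated to a homomorphism `θ : H →* AddAut A`,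
used to form the semidirect product `A ⋊_θ H` in multiplicative notation. -/
def sdAction {A H : Type*} [AddGroup A] [Group H] (θ : H →* AddAut A) :
    H →* MulAut (Multiplicative A) :=
  (addAutToMulAut A).comp θ

/-!
Let `G = ℤ/p^r ⋊_θ ℤ/d₁` act on `ℤ/p^r` by affine maps; this is faithful since `θ` is injective,
and `|G| = p^r d₁` is odd. It suffices to lift `Φ : G → S_N` (`N = p^r`) through
`B_N/Γ₂(P_N) → S_N`, whose kernel `P_N/Γ₂(P_N)` is abelian. The obstruction is the class of a
2-cocycle in `H²(G, P_N/Γ₂(P_N))`. This class is killed by `|G|`, and also by `2`: the automorphism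
`σᵢ ↦ σᵢ⁻¹` induces the identity on `S_N` and inversion on `P_N/Γ₂(P_N)`, because `P_N` is the
normal closure of the `σᵢ²` (the quotient `B_N/⟪σᵢ²⟫` has at most `N!` elements, by the normal
form of the Coxeter presentation of `S_N`). As `|G|` is odd, the class vanishes.
-/

namespace groupCohomology

variable {G M : Type*} [Group G] [CommGroup M] [MulDistribMulAction G M] {f f' : G × G → M}

theorem IsMulCoboundary₂.mul (hf : IsMulCoboundary₂ f) (hf' : IsMulCoboundary₂ f') :
    IsMulCoboundary₂ (f * f') := by
  obtain ⟨x, hx⟩ := hf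
  obtain ⟨y, hy⟩ := hf'
  refine ⟨x * y, fun g h => ?_⟩
  simp only [Pi.mul_apply, smul_mul', ← hx, ← hy, div_eq_mul_inv, mul_inv]
  ac_rfl

theorem IsMulCoboundary₂.inv (hf : IsMulCoboundary₂ f) : IsMulCoboundary₂ f⁻¹ := by
  obtain ⟨x, hx⟩ := hf
  refine ⟨x⁻¹, fun g h => ?_⟩
  simp only [Pi.inv_apply, smul_inv', ← hx, div_eq_mul_inv, mul_inv]

theorem IsMulCoboundary₂.pow (hf : IsMulCoboundary₂ f) (n : ℕ) : IsMulCoboundary₂ (f ^ n) := by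
  obtain ⟨x, hx⟩ := hf
  refine ⟨x ^ n, fun g h => ?_⟩
  simp only [Pi.pow_apply, smul_pow', ← hx, div_eq_mul_inv, mul_pow, inv_pow]

theorem IsMulCocycle₂.isMulCoboundary₂_pow_card [Finite G] (hf : IsMulCocycle₂ f) :
    IsMulCoboundary₂ (f ^ Nat.card G) := by
  have := Fintype.ofFinite G
  refine ⟨fun g => ∏ j, f (g, j), fun g h => ?_⟩
  have hsum := Finset.prod_congr rfl fun j (_ : j ∈ Finset.univ) => hf g h j
  rw [Finset.prod_mul_distrib, Finset.prod_mul_distrib, Finset.prod_const, Finset.card_univ,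
    Fintype.prod_equiv (Equiv.mulLeft h) (fun j => f (g, h * j)) (fun j => f (g, j)) fun _ => rfl,
    ← Finset.smul_prod'] at hsum
  simp only [Pi.pow_apply, Nat.card_eq_fintype_card, div_eq_mul_inv]
  rw [eq_inv_mul_of_mul_eq hsum]
  ac_rfl

theorem IsMulCocycle₂.isMulCoboundary₂_of_sq [Finite G] (hf : IsMulCocycle₂ f)
    (hG : Odd (Nat.card G)) (hsq : IsMulCoboundary₂ (f ^ 2)) : IsMulCoboundary₂ f := by
  obtain ⟨k, hk⟩ := hG
  have hf_eq : f = f ^ Nat.card G * ((f ^ 2) ^ k)⁻¹ := by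
    rw [hk, ← pow_mul, pow_succ, mul_inv_cancel_comm]
  rw [hf_eq]
  exact hf.isMulCoboundary₂_pow_card.mul (hsq.pow k).inv

end groupCohomology

namespace QuotientGroup

open scoped IsMulCommutative

variable {G : Type*} [Group G] {N : Subgroup G} [N.Normal]

noncomputable instance conjMulDistribMulAction [IsMulCommutative N] :
    MulDistribMulAction (G ⧸ N) N :=
  MulDistribMulAction.compHom N <| lift N (MulAut.conjNormal (H := N)) fun k hk => by
    ext n
    simp [MulAut.conjNormal_apply, setLike_mul_comm hk n.2]

theorem coe_smul_coe [IsMulCommutative N] (g : G) (k : N) :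
    (((g : G ⧸ N) • k : N) : G) = g * k * g⁻¹ :=
  MulAut.conjNormal_apply g k

theorem eq_inv_of_mem_normalClosure [IsMulCommutative N] {ε : G →* G}
    (hε : ∀ g, (ε g : G ⧸ N) = g) {S : Set G} (hS : ∀ k ∈ S, k ∈ N ∧ ε k = k⁻¹) {k : G}
    (hk : k ∈ Subgroup.normalClosure S) : ε k = k⁻¹ := by
  let M : Subgroup G :=
    { carrier := {k | k ∈ N ∧ ε k = k⁻¹}
      one_mem' := ⟨N.one_mem, by simp⟩
      mul_mem' := fun {a b} ⟨ha, ha'⟩ ⟨hb, hb'⟩ => ⟨N.mul_mem ha hb, by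
        rw [map_mul, ha', hb', mul_inv_rev, setLike_mul_comm (N.inv_mem hb) (N.inv_mem ha)]⟩
      inv_mem' := fun {a} ⟨ha, ha'⟩ => ⟨N.inv_mem ha, by rw [map_inv, ha']⟩ }
  have : M.Normal := ⟨fun k ⟨hkN, hk⟩ g => ⟨Subgroup.Normal.conj_mem inferInstance k hkN g, by
    -- `ε g` and `g` agree modulo `N`, so they act on `N` alike
    have h := coe_smul_coe (ε g) ⟨k⁻¹, N.inv_mem hkN⟩
    rw [hε g, coe_smul_coe] at h
    rw [map_mul, map_mul, map_inv, hk, ← h]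
    group⟩⟩
  exact (Subgroup.normalClosure_le_normal (N := M) hS hk).2

section Lift

variable (R : Subgroup (G ⧸ N)) {s : R → G}

theorem coe_smul_of_section [IsMulCommutative N] (hs : ∀ a, (s a : G ⧸ N) = a) (a : R) (k : N) :
    ((a • k : N) : G) = s a * k * (s a)⁻¹ := by
  rw [Subgroup.smul_def, ← hs a, coe_smul_coe]

def sectionCocycle (hs : ∀ a, (s a : G ⧸ N) = a) : R × R → N := fun a =>
  ⟨s a.1 * s a.2 * (s (a.1 * a.2))⁻¹, by
    rw [← QuotientGroup.eq_one_iff]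
    simp [hs]⟩

theorem coe_sectionCocycle (hs : ∀ a, (s a : G ⧸ N) = a) (a b : R) :
    (sectionCocycle R hs (a, b) : G) = s a * s b * (s (a * b))⁻¹ := rfl

variable [IsMulCommutative N]

theorem isMulCocycle₂_sectionCocycle (hs : ∀ a, (s a : G ⧸ N) = a) :
    groupCohomology.IsMulCocycle₂ (sectionCocycle R hs) := by
  intro a b c
  rw [mul_comm]
  ext
  simp only [Subgroup.coe_mul, coe_smul_of_section R hs, coe_sectionCocycle, mul_assoc]
  group

theorem exists_lift_of_isMulCoboundary₂ (hs : ∀ a, (s a : G ⧸ N) = a)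
    (h : groupCohomology.IsMulCoboundary₂ (sectionCocycle R hs)) :
    ∃ τ : R →* G, ∀ a, (τ a : G ⧸ N) = a := by
  obtain ⟨x, hx⟩ := h
  refine ⟨MonoidHom.mk' (fun a => (x a : G)⁻¹ * s a) fun a b => ?_, fun a => ?_⟩
  · have hP : (x (a * b))⁻¹ = (x a)⁻¹ * (a • x b)⁻¹ * sectionCocycle R hs (a, b) := by
      rw [← hx, div_mul_eq_mul_div, div_eq_mul_inv]
      simp only [mul_assoc, inv_mul_cancel_left]
    have hP' := congrArg (fun k : N => (k : G)) hP
    simp only [Subgroup.coe_mul, Subgroup.coe_inv, coe_smul_of_section R hs,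
      coe_sectionCocycle] at hP'
    simp only [hP']
    group
  · simp [hs]

theorem isMulCoboundary₂_sectionCocycle_sq {ε : G →* G} (hε : ∀ g, (ε g : G ⧸ N) = g)
    (hεN : ∀ k ∈ N, ε k = k⁻¹) (hs : ∀ a, (s a : G ⧸ N) = a) :
    groupCohomology.IsMulCoboundary₂ (sectionCocycle R hs ^ 2) := by
  -- `F g = g * (ε g)⁻¹ ∈ N` satisfies `F (g * h) = g * F h * g⁻¹ * F g` and `F (k * g) = k² * F g`
  -- for `k ∈ N`; apply this to `s a * s b = P * s (a * b)`
  let x : R → N := fun a => ⟨s a * (ε (s a))⁻¹, by rw [← QuotientGroup.eq_one_iff]; simp [hε]⟩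
  refine ⟨x, fun a b => ?_⟩
  set P := sectionCocycle R hs (a, b)
  have hεP : ε (s a) * ε (s b) * (ε (s (a * b)))⁻¹ = s (a * b) * (s b)⁻¹ * (s a)⁻¹ := by
    simpa [P, coe_sectionCocycle, mul_assoc] using hεN P P.2
  have hεc : (ε (s (a * b)))⁻¹ = (ε (s b))⁻¹ * (ε (s a))⁻¹ * (s (a * b) * (s b)⁻¹ * (s a)⁻¹) := by
    rw [← hεP]
    group
  have key : a • x b * x a = P * x (a * b) * P := by
    ext
    simp only [Subgroup.coe_mul, coe_smul_of_section R hs, x, P, coe_sectionCocycle, hεc]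
    group
  rw [Pi.pow_apply, div_mul_eq_mul_div, key, mul_right_comm, ← sq, mul_div_cancel_right]

theorem exists_lift_of_odd_card {ε : G →* G} (hε : ∀ g, (ε g : G ⧸ N) = g)
    (hεN : ∀ k ∈ N, ε k = k⁻¹) [Finite R] (hR : Odd (Nat.card R)) :
    ∃ τ : R →* G, ∀ a, (τ a : G ⧸ N) = a := by
  choose s hs using fun a : R => QuotientGroup.mk_surjective (a : G ⧸ N)
  refine exists_lift_of_isMulCoboundary₂ R hs ?_
  exact (isMulCocycle₂_sectionCocycle R hs).isMulCoboundary₂_of_sq hR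
    (isMulCoboundary₂_sectionCocycle_sq R hε hεN hs)

end Lift

theorem exists_monoidHom_lift_of_odd_card [IsMulCommutative N] {ε : G →* G}
    (hε : ∀ g, (ε g : G ⧸ N) = g) (hεN : ∀ k ∈ N, ε k = k⁻¹) {H : Type*} [Group H] [Finite H]
    (hH : Odd (Nat.card H)) (Φ : H →* G ⧸ N) : ∃ τ : H →* G, (mk' N).comp τ = Φ := by
  have : Finite Φ.range := Finite.of_surjective _ Φ.rangeRestrict_surjective
  obtain ⟨τ, hτ⟩ :=
    exists_lift_of_odd_card Φ.range hε hεN (hH.of_dvd_nat (Subgroup.card_range_dvd Φ))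
  exact ⟨τ.comp Φ.rangeRestrict, MonoidHom.ext fun h => hτ _⟩

end QuotientGroup

section CoxeterA

open scoped Pointwise

variable {G : Type*} [Group G]

structure SatisfiesCoxeterA (s : ℕ → G) (m : ℕ) : Prop where
  sq : ∀ k < m, s k * s k = 1
  comm : ∀ k l, k + 2 ≤ l → l < m → s k * s l = s l * s k
  braid : ∀ k, k + 1 < m → s k * s (k + 1) * s k = s (k + 1) * s k * s (k + 1)

variable {s : ℕ → G} {m : ℕ}

theorem SatisfiesCoxeterA.mono (h : SatisfiesCoxeterA s (m + 1)) : SatisfiesCoxeterA s m where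
  sq k hk := h.sq k (by omega)
  comm k l hkl hl := h.comm k l hkl (by omega)
  braid k hk := h.braid k (by omega)

variable (s) in
def descProd (m : ℕ) : ℕ → G
  | 0 => 1
  | k + 1 => descProd m k * s (m - k)

theorem descProd_mul_comm (h : SatisfiesCoxeterA s (m + 1)) :
    ∀ {k t : ℕ}, t + k < m → descProd s m k * s t = s t * descProd s m k
  | 0, _, _ => by simp [descProd]
  | k + 1, t, htk => by
    rw [descProd, mul_assoc, ← h.comm t (m - k) (by omega) (by omega), ← mul_assoc,
      descProd_mul_comm h (by omega), mul_assoc]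

theorem descProd_mul_eq_pred_mul (h : SatisfiesCoxeterA s (m + 1)) :
    ∀ {k t : ℕ}, k ≤ m + 1 → m + 2 ≤ t + k → t ≤ m →
      descProd s m k * s t = s (t - 1) * descProd s m k
  | 0, _, _, _, _ => by omega
  | 1, _, _, _, _ => by omega
  | k + 2, t, hk, htk, htm => by
    rw [descProd]
    rcases (by omega : t + k = m ∨ m + 1 ≤ t + k) with htk' | htk'
    · obtain ⟨t, rfl⟩ : ∃ t', t = t' + 1 := ⟨t - 1, by omega⟩
      rw [descProd, show m - k = t + 1 by omega, show m - (k + 1) = t by omega,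
        Nat.add_sub_cancel]
      calc descProd s m k * s (t + 1) * s t * s (t + 1)
          = descProd s m k * (s t * s (t + 1) * s t) := by
            rw [h.braid t (by omega)]; simp only [mul_assoc]
        _ = s t * (descProd s m k * s (t + 1) * s t) := by
            rw [← mul_assoc, ← mul_assoc, descProd_mul_comm h (by omega)]; simp only [mul_assoc]
    · calc descProd s m (k + 1) * s (m - (k + 1)) * s t
          = descProd s m (k + 1) * s t * s (m - (k + 1)) := by
            rw [mul_assoc, h.comm _ t (by omega) (by omega), mul_assoc]
        _ = s (t - 1) * (descProd s m (k + 1) * s (m - (k + 1))) := by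
            rw [descProd_mul_eq_pred_mul h (by omega) (by omega) htm, mul_assoc]

theorem descProd_mul_eq_or (h : SatisfiesCoxeterA s (m + 1)) {k t : ℕ} (hk : k ≤ m + 1)
    (ht : t ≤ m) :
    (∃ k' ≤ m + 1, descProd s m k * s t = descProd s m k') ∨
      ∃ t' < m, descProd s m k * s t = s t' * descProd s m k := by
  obtain htk | htk | htk | htk : t + k < m ∨ t + k = m ∨ t + k = m + 1 ∨ m + 2 ≤ t + k := by
    omega
  · exact .inr ⟨t, by omega, descProd_mul_comm h htk⟩
  · exact .inl ⟨k + 1, by omega, by rw [descProd, show m - k = t by omega]⟩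
  · obtain ⟨k, rfl⟩ : ∃ k', k = k' + 1 := ⟨k - 1, by omega⟩
    refine .inl ⟨k, by omega, ?_⟩
    rw [descProd, show m - k = t by omega, mul_assoc, h.sq t (by omega), mul_one]
  · exact .inr ⟨t - 1, by omega, descProd_mul_eq_pred_mul h hk htk ht⟩

variable (s) in
open Classical in
/-- The products `descProd s 0 k₀ * ⋯ * descProd s (m - 1) k_{m-1}` with `kᵢ ≤ i + 1`: the
standard normal forms of the symmetric group `S_{m+1}` in the adjacent transpositions. -/
noncomputable def normalForms : ℕ → Finset G
  | 0 => {1}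
  | m + 1 => normalForms m * (Finset.range (m + 2)).image (descProd s m)

theorem card_normalForms_le : ∀ m, (normalForms s m).card ≤ (m + 1).factorial
  | 0 => by simp [normalForms]
  | m + 1 => by
    classical
    rw [normalForms, Nat.factorial_succ (m + 1), mul_comm]
    exact Finset.card_mul_le.trans <|
      Nat.mul_le_mul (card_normalForms_le m) (Finset.card_image_le.trans (by simp))

theorem mem_normalForms_succ {u : G} :
    u ∈ normalForms s (m + 1) ↔ ∃ v ∈ normalForms s m, ∃ k ≤ m + 1, v * descProd s m k = u := by
  simp [normalForms, Finset.mem_mul, Nat.lt_succ_iff]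

theorem mul_descProd_mem_normalForms {u : G} (hu : u ∈ normalForms s m) {k : ℕ} (hk : k ≤ m + 1) :
    u * descProd s m k ∈ normalForms s (m + 1) :=
  mem_normalForms_succ.2 ⟨u, hu, k, hk, rfl⟩

theorem one_mem_normalForms : ∀ m, (1 : G) ∈ normalForms s m
  | 0 => Finset.mem_singleton_self 1
  | m + 1 => by
    simpa [descProd] using mul_descProd_mem_normalForms (one_mem_normalForms m) (Nat.zero_le _)

theorem mul_mem_normalForms (h : SatisfiesCoxeterA s m) {u : G} (hu : u ∈ normalForms s m) {t : ℕ}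
    (ht : t < m) : u * s t ∈ normalForms s m := by
  induction m generalizing u t with
  | zero => omega
  | succ m ih =>
    obtain ⟨v, hv, k, hk, rfl⟩ := mem_normalForms_succ.1 hu
    rcases descProd_mul_eq_or h hk (by omega : t ≤ m) with
      ⟨k', hk', he⟩ | ⟨t', ht', he⟩
    · rw [mul_assoc, he]
      exact mul_descProd_mem_normalForms hv hk'
    · rw [mul_assoc, he, ← mul_assoc]
      exact mul_descProd_mem_normalForms (ih h.mono hv ht') (by omega)

theorem SatisfiesCoxeterA.closure_subset_normalForms (h : SatisfiesCoxeterA s m) :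
    (Subgroup.closure (s '' Set.Iio m) : Set G) ⊆ normalForms s m := by
  intro g hg
  induction hg using Subgroup.closure_induction_right with
  | one => exact one_mem_normalForms m
  | mul_right x _ y hy ih =>
    obtain ⟨t, ht, rfl⟩ := hy
    exact mul_mem_normalForms h ih ht
  | mul_inv_cancel x _ y hy ih =>
    obtain ⟨t, ht, rfl⟩ := hy
    rw [inv_eq_of_mul_eq_one_right (h.sq t ht)]
    exact mul_mem_normalForms h ih ht

theorem SatisfiesCoxeterA.finite_closure (h : SatisfiesCoxeterA s m) :
    Finite (Subgroup.closure (s '' Set.Iio m)) :=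
  ((normalForms s m).finite_toSet.subset h.closure_subset_normalForms).to_subtype

theorem SatisfiesCoxeterA.card_closure_le (h : SatisfiesCoxeterA s m) :
    Nat.card (Subgroup.closure (s '' Set.Iio m)) ≤ (m + 1).factorial :=
  (Nat.card_mono (normalForms s m).finite_toSet h.closure_subset_normalForms).trans <| by
    simpa using card_normalForms_le m

end CoxeterA

section Affine

variable {A H : Type*} [AddGroup A] [Group H]

def addAutToPerm (A : Type*) [Add A] : AddAut A →* Equiv.Perm A where
  toFun f := f.toEquiv
  map_one' := rfl
  map_mul' _ _ := rfl

def translationPerm (A : Type*) [AddGroup A] : Multiplicative A →* Equiv.Perm A where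
  toFun a := Equiv.addLeft a.toAdd
  map_one' := by ext; simp
  map_mul' a b := by ext; simp

def affinePerm (θ : H →* AddAut A) : Multiplicative A ⋊[sdAction θ] H →* Equiv.Perm A :=
  SemidirectProduct.lift (translationPerm A) ((addAutToPerm A).comp θ) fun h => by
    ext a x
    change θ h a + x = θ h (a + (θ h).symm x)
    simp

theorem affinePerm_apply (θ : H →* AddAut A) (x : Multiplicative A ⋊[sdAction θ] H) (y : A) :
    affinePerm θ x y = x.left.toAdd + θ x.right y := rfl

theorem affinePerm_injective {θ : H →* AddAut A} (hθ : Function.Injective θ) :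
    Function.Injective (affinePerm θ) := by
  refine (injective_iff_map_eq_one _).2 fun x hx => ?_
  have hleft : x.left = 1 := by
    simpa [affinePerm_apply] using DFunLike.congr_fun hx 0
  have hright : x.right = 1 := hθ <| by
    rw [map_one]
    ext y
    change _ = y
    simpa [affinePerm_apply, hleft] using DFunLike.congr_fun hx y
  exact SemidirectProduct.ext hleft hright

end Affine

namespace BraidGroup

open PresentedGroup

variable {n : ℕ}

theorem of_mul_of_comm {i j : Fin (n - 1)} (h : (i : ℕ) + 2 ≤ j) :
    (of i : BraidGroup n) * of j = of j * of i :=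
  commutatorElement_eq_one_iff_mul_comm.1 (one_of_mem ⟨i, j, .inl ⟨h, rfl⟩⟩)

theorem of_braid {i j : Fin (n - 1)} (h : (i : ℕ) + 1 = j) :
    (of i : BraidGroup n) * of j * of i = of j * of i * of j :=
  mul_inv_eq_one.1 (one_of_mem ⟨i, j, .inr ⟨h, rfl⟩⟩)

theorem braidProj_of (i : Fin (n - 1)) : braidProj n (of i) = braidGenPerm n i :=
  toGroup.of _

theorem braidProj_surjective : ∀ n, Function.Surjective (braidProj n)
  | 0 => fun _ => ⟨1, Subsingleton.elim _ _⟩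
  | m + 1 => by
    rw [← MonoidHom.mrange_eq_top, eq_top_iff, ← Equiv.Perm.mclosure_swap_castSucc_succ,
      Submonoid.closure_le]
    rintro _ ⟨i, rfl⟩
    exact ⟨(of i : BraidGroup (m + 1)), braidProj_of (n := m + 1) i⟩

def mirror (n : ℕ) : BraidGroup n →* BraidGroup n :=
  toGroup (f := fun i => (of i)⁻¹) <| by
    rintro r ⟨i, j, ⟨hij, rfl⟩ | ⟨hij, rfl⟩⟩ <;>
      simp only [map_mul, map_inv, FreeGroup.lift_apply_of]
    · refine commutatorElement_eq_one_iff_mul_comm.2 ?_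
      simpa using congrArg Inv.inv (of_mul_of_comm hij).symm
    · rw [mul_inv_eq_one]
      simpa [mul_assoc] using congrArg Inv.inv (of_braid hij)

theorem mirror_of (i : Fin (n - 1)) : mirror n (of i) = (of i)⁻¹ :=
  toGroup.of _

theorem braidProj_mirror (w : BraidGroup n) : braidProj n (mirror n w) = braidProj n w := by
  refine DFunLike.congr_fun (PresentedGroup.ext fun i => ?_ : (braidProj n).comp (mirror n) = _) w
  simp [mirror_of, braidProj_of, braidGenPerm]

def sqClosure (n : ℕ) : Subgroup (BraidGroup n) :=
  Subgroup.normalClosure (Set.range fun i => (of i : BraidGroup n) ^ 2)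

instance : (sqClosure n).Normal := Subgroup.normalClosure_normal

theorem sqClosure_le_ker : sqClosure n ≤ (braidProj n).ker := by
  refine Subgroup.normalClosure_le_normal ?_
  rintro _ ⟨i, rfl⟩
  simp [braidProj_of, braidGenPerm, sq]

noncomputable def sqQuotGen (n k : ℕ) : BraidGroup n ⧸ sqClosure n :=
  if h : k < n - 1 then ((of ⟨k, h⟩ : BraidGroup n) : BraidGroup n ⧸ sqClosure n) else 1

theorem satisfiesCoxeterA_sqQuotGen : SatisfiesCoxeterA (sqQuotGen n) (n - 1) where
  sq k hk := by
    rw [sqQuotGen, dif_pos hk, ← QuotientGroup.mk_mul, QuotientGroup.eq_one_iff, ← sq]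
    exact Subgroup.subset_normalClosure ⟨_, rfl⟩
  comm k l hkl hl := by
    simp only [sqQuotGen, dif_pos hl, dif_pos (by omega : k < n - 1), ← QuotientGroup.mk_mul,
      of_mul_of_comm (by exact hkl : (⟨k, _⟩ : Fin (n - 1)).val + 2 ≤ (⟨l, hl⟩ : Fin (n - 1)))]
  braid k hk := by
    simp only [sqQuotGen, dif_pos hk, dif_pos (by omega : k < n - 1), ← QuotientGroup.mk_mul]
    rw [of_braid (j := ⟨k + 1, hk⟩) rfl]

theorem closure_sqQuotGen : Subgroup.closure (sqQuotGen n '' Set.Iio (n - 1)) = ⊤ := by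
  rw [eq_top_iff, ← Subgroup.map_top_of_surjective _ (QuotientGroup.mk'_surjective (sqClosure n)),
    ← closure_range_of, MonoidHom.map_closure]
  refine Subgroup.closure_mono ?_
  rintro _ ⟨_, ⟨i, rfl⟩, rfl⟩
  exact ⟨i, i.2, dif_pos i.2⟩

/-- `B_n ⧸ ⟪σᵢ²⟫` has at most `n!` elements, so it is `S_n`. -/
theorem ker_braidProj_le_sqClosure : (braidProj n).ker ≤ sqClosure n := by
  have hcox := satisfiesCoxeterA_sqQuotGen (n := n)
  have hfin : Finite (⊤ : Subgroup (BraidGroup n ⧸ sqClosure n)) :=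
    closure_sqQuotGen (n := n) ▸ hcox.finite_closure
  have hcard := hcox.card_closure_le
  rw [closure_sqQuotGen] at hcard
  rw [Subgroup.card_top, show (n - 1 + 1).factorial = Nat.card (Equiv.Perm (Fin n)) by
    cases n <;> simp [Nat.card_eq_fintype_card, Fintype.card_perm]] at hcard
  have : Finite (BraidGroup n ⧸ sqClosure n) := .of_equiv _ Subgroup.topEquiv.toEquiv
  let π : BraidGroup n ⧸ sqClosure n →* Equiv.Perm (Fin n) :=
    QuotientGroup.lift _ (braidProj n) sqClosure_le_ker
  have hπ : Function.Surjective π := fun σ =>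
    (braidProj_surjective n σ).elim fun w hw => ⟨w, hw⟩
  intro w hw
  rw [← QuotientGroup.eq_one_iff]
  exact (hπ.bijective_of_nat_card_le hcard).1 (by simpa [π] using hw)

theorem gammaB_two : gammaB n 2 = ⁅(braidProj n).ker, (braidProj n).ker⁆ := by
  rw [gammaB, show 2 - 1 = 1 from rfl, Subgroup.top_lowerCentralSeries_one,
    Subgroup.map_subtype_commutator, Subgroup.normalClosure_eq_self]

theorem braidProjBar_mk (w : BraidGroup n) : braidProjBar n 2 w = braidProj n w := rfl

instance : IsMulCommutative (braidProjBar n 2).ker :=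
  IsMulCommutative.of_setLike_mul_comm fun x hx y hy => by
    obtain ⟨a, rfl⟩ := QuotientGroup.mk_surjective x
    obtain ⟨b, rfl⟩ := QuotientGroup.mk_surjective y
    rw [← commutatorElement_eq_one_iff_mul_comm, ← QuotientGroup.mk'_apply,
      ← QuotientGroup.mk'_apply, ← map_commutatorElement, QuotientGroup.mk'_apply,
      QuotientGroup.eq_one_iff, gammaB_two]
    exact Subgroup.commutator_mem_commutator hx hy

theorem map_mirror_gammaB_two_le : (gammaB n 2).map (mirror n) ≤ gammaB n 2 := by
  have hker : (braidProj n).ker.map (mirror n) ≤ (braidProj n).ker := by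
    rintro _ ⟨w, hw, rfl⟩
    rwa [MonoidHom.mem_ker, braidProj_mirror]
  rw [gammaB_two, Subgroup.map_commutator]
  exact Subgroup.commutator_mono hker hker

def mirrorBar (n : ℕ) : BraidGroup n ⧸ gammaB n 2 →* BraidGroup n ⧸ gammaB n 2 :=
  QuotientGroup.map _ _ (mirror n) (Subgroup.map_le_iff_le_comap.1 map_mirror_gammaB_two_le)

theorem mk_mirrorBar (q : BraidGroup n ⧸ gammaB n 2) :
    (mirrorBar n q : _ ⧸ (braidProjBar n 2).ker) = q := by
  obtain ⟨w, rfl⟩ := QuotientGroup.mk_surjective q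
  refine (QuotientGroup.eq.2 ?_).symm
  simp [MonoidHom.mem_ker, mirrorBar, braidProjBar_mk, braidProj_mirror]

theorem mirrorBar_eq_inv {q : BraidGroup n ⧸ gammaB n 2} (hq : q ∈ (braidProjBar n 2).ker) :
    mirrorBar n q = q⁻¹ := by
  obtain ⟨w, rfl⟩ := QuotientGroup.mk_surjective q
  refine QuotientGroup.eq_inv_of_mem_normalClosure mk_mirrorBar
    (S := QuotientGroup.mk' _ '' Set.range fun i => (of i : BraidGroup n) ^ 2) ?_ ?_
  · rintro _ ⟨_, ⟨i, rfl⟩, rfl⟩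
    refine ⟨sqClosure_le_ker (Subgroup.subset_normalClosure ⟨i, rfl⟩), ?_⟩
    simp [mirrorBar, mirror_of, inv_pow]
  · rw [← Subgroup.map_normalClosure _ _ (QuotientGroup.mk'_surjective _)]
    exact ⟨w, ker_braidProj_le_sqClosure hq, rfl⟩

theorem exists_lift_of_odd_card {H : Type*} [Group H] [Finite H] (hH : Odd (Nat.card H))
    (Φ : H →* Equiv.Perm (Fin n)) :
    ∃ τ : H →* BraidGroup n ⧸ gammaB n 2, (braidProjBar n 2).comp τ = Φ := by
  have hsurj : Function.Surjective (braidProjBar n 2) := fun σ =>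
    (braidProj_surjective n σ).elim fun w hw => ⟨w, hw⟩
  let e := QuotientGroup.quotientKerEquivOfSurjective _ hsurj
  obtain ⟨τ, hτ⟩ := QuotientGroup.exists_monoidHom_lift_of_odd_card mk_mirrorBar
    (fun _ => mirrorBar_eq_inv) hH (e.symm.toMonoidHom.comp Φ)
  refine ⟨τ, MonoidHom.ext fun h => ?_⟩
  have h' := congrArg e (DFunLike.congr_fun hτ h)
  simp only [MonoidHom.comp_apply, MulEquiv.coe_toMonoidHom, MulEquiv.apply_symm_apply] at h'
  exact h'

end BraidGroup

theorem embed_prime_power_gamma2_general (p : ℕ) (hpodd : Odd p)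
    (r : ℕ) (d₁ : ℕ) (hd₁odd : Odd d₁)
    (θ : Multiplicative (ZMod d₁) →* AddAut (ZMod (p ^ r)))
    (hθ : Function.Injective θ) :
    ∃ ι : (Multiplicative (ZMod (p ^ r))) ⋊[sdAction θ] (Multiplicative (ZMod d₁)) →*
        BraidGroup (p ^ r) ⧸ gammaB (p ^ r) 2, Function.Injective ι := by
  have : NeZero (p ^ r) := ⟨hpodd.pow.pos.ne'⟩
  have : NeZero d₁ := ⟨hd₁odd.pos.ne'⟩
  have : Finite (Multiplicative (ZMod (p ^ r)) ⋊[sdAction θ] Multiplicative (ZMod d₁)) :=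
    .of_equiv _ SemidirectProduct.equivProd.symm
  have hodd :
      Odd (Nat.card (Multiplicative (ZMod (p ^ r)) ⋊[sdAction θ] Multiplicative (ZMod d₁))) := by
    simpa using hpodd.pow.mul hd₁odd
  let e := (ZMod.finEquiv (p ^ r)).symm.toEquiv.permCongrHom
  let Φ := e.toMonoidHom.comp (affinePerm θ)
  have hΦ : Function.Injective Φ := e.injective.comp (affinePerm_injective hθ)
  obtain ⟨τ, hτ⟩ := BraidGroup.exists_lift_of_odd_card hodd Φ
  exact ⟨τ, .of_comp (f := braidProjBar _ 2) (by rwa [← MonoidHom.coe_comp, hτ])⟩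

/-- Let `p` be an odd prime, `r ≥ 1`, `d₁` an odd positive divisor of
`p − 1`, and `θ : ℤ/d₁ℤ → AddAut (ℤ/p^rℤ)` an injective homomorphism. Then the semidirect
product `(ℤ/p^rℤ) ⋊_θ (ℤ/d₁ℤ)` embeds in `B_{p^r}/Γ_2(P_{p^r})`. -/
theorem embed_prime_power_gamma2 (p : ℕ) (hp : p.Prime) (hpodd : Odd p)
    (r : ℕ) (hr : 1 ≤ r) (d₁ : ℕ) (hd₁ : 1 ≤ d₁) (hd₁odd : Odd d₁) (hdvd : d₁ ∣ p - 1)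
    (θ : Multiplicative (ZMod d₁) →* AddAut (ZMod (p ^ r)))
    (hθ : Function.Injective θ) :
    ∃ ι : (Multiplicative (ZMod (p ^ r))) ⋊[sdAction θ] (Multiplicative (ZMod d₁)) →*
        BraidGroup (p ^ r) ⧸ gammaB (p ^ r) 2, Function.Injective ι :=
  embed_prime_power_gamma2_general p hpodd r d₁ hd₁odd θ hθ
end
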